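/- Let n ≥ 2, k ≥ 2, and G = (ℤ/nℤ) wr ℤ^k with generating set {a, b_1, …, b_k}, where a generates the passive copy of ℤ/nℤ (supported at the identity of ℤ^k) and b_1, …, b_k are the standard generators of the active group ℤ^k. Let w = [⋯[[a, b_1], b_2], ⋯, b_{k−1}] and H = ⟨w, b_1, …, b_k⟩. Then Δ_H^G(l) ⪰ l^k; in particular, G has a finitely generated subgroup whose distortion is at least l^k. -/

import Mathlib

/-!
Read the base of `(ℤ/nℤ) wr ℤ^k` as the group ring `(ℤ/nℤ)[ℤ^k]` (`basePoly`). Conjugating by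
`t ∈ ℤ^k` multiplies the base by the monomial `t`, and the commutator with `t` multiplies it by
`1 - t`. Hence `w` has base `D = (1 - x_1) ⋯ (1 - x_{k-1})`, a non-zero-divisor, and `H` is
exactly the set of elements whose base is divisible by `D`. The number of monomials of the
cofactor `base / D` is subadditive and invariant under inversion, so on `H` it is at most a
constant times the word length in any finite generating set. The iterated commutator
`[⋯[(a b_k)^l b_k^{-l}, b_1^l], ⋯, b_{k-1}^l]` has length `O(l)` in `G`, but its cofactor is
`∏ᵢ (1 + x_i + ⋯ + x_i^{l-1})`, which has `l^k` monomials.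
-/

open scoped Pointwise
open scoped commutatorElement

namespace DistortionPaper

section Defs

variable (A B : Type*) [Group A] [Group B]

/-- The base group of the restricted wreath product: finitely supported functions `B → A`
under pointwise multiplication, as a subgroup of `B → A`. -/
def WreathBase : Subgroup (B → A) where
  carrier := {f | (Function.mulSupport f).Finite}
  one_mem' := by
    simp [Function.mulSupport_one]
  mul_mem' := by
    intro f g hf hg
    exact ((Set.Finite.union hf hg).subset (Function.mulSupport_mul f g))
  inv_mem' := by
    intro f hf
    simpa [Function.mulSupport_inv] using hf

/-- The shift automorphism of the base group: `(g ∘ f)(x) = f(x * g)`. -/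
def wreathShift (g : B) : WreathBase A B ≃* WreathBase A B where
  toFun f := ⟨fun x => (f : B → A) (x * g), by
    have h : Function.mulSupport (fun x => (f : B → A) (x * g))
        ⊆ (fun x : B => x * g) ⁻¹' Function.mulSupport (f : B → A) := fun x hx => hx
    exact (Set.Finite.preimage (Set.injOn_of_injective (mul_left_injective g)) f.2).subset h⟩
  invFun f := ⟨fun x => (f : B → A) (x * g⁻¹), by
    have h : Function.mulSupport (fun x => (f : B → A) (x * g⁻¹))
        ⊆ (fun x : B => x * g⁻¹) ⁻¹' Function.mulSupport (f : B → A) := fun x hx => hx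
    exact (Set.Finite.preimage (Set.injOn_of_injective (mul_left_injective g⁻¹)) f.2).subset h⟩
  left_inv f := Subtype.ext <| funext fun x => by simp [mul_assoc]
  right_inv f := Subtype.ext <| funext fun x => by simp [mul_assoc]
  map_mul' f₁ f₂ := Subtype.ext <| funext fun _ => rfl

/-- The action of `B` on the base group by shifts. -/
def wreathAction : B →* MulAut (WreathBase A B) where
  toFun g := wreathShift A B g
  map_one' := by
    refine MulEquiv.ext fun f => Subtype.ext <| funext fun x => ?_
    show (f : B → A) (x * 1) = (f : B → A) x
    rw [mul_one]
  map_mul' g₁ g₂ := by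
    refine MulEquiv.ext fun f => Subtype.ext <| funext fun x => ?_
    show (f : B → A) (x * (g₁ * g₂)) = (f : B → A) (x * g₁ * g₂)
    rw [mul_assoc]

/-- The restricted wreath product `A wr B`. -/
abbrev WreathProduct := WreathBase A B ⋊[wreathAction A B] B

/-- The element of the base group supported at `1 ∈ B` with value `a`. -/
noncomputable def toBase (a : A) : WreathBase A B := by
  classical
  exact ⟨fun x => if x = (1 : B) then a else 1, by
    apply Set.Finite.subset (Set.finite_singleton (1 : B))
    intro x hx
    simp only [Function.mem_mulSupport] at hx
    simp only [Set.mem_singleton_iff]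
    by_contra hne
    rw [if_neg hne] at hx
    exact hx rfl⟩

/-- The canonical copy of `A` in `A wr B` (functions supported at `1`). -/
noncomputable def ofPassive (a : A) : WreathProduct A B :=
  SemidirectProduct.inl (toBase A B a)

/-- The canonical copy of `B` in `A wr B`. -/
def ofActive (g : B) : WreathProduct A B := SemidirectProduct.inr g

/-- The generating set `S ∪ T` of `A wr B` obtained from generating sets `S` of `A`
and `T` of `B`. -/
def wreathGen (S : Set A) (T : Set B) : Set (WreathProduct A B) :=
  (fun a => ofPassive A B a) '' S ∪ (fun g => ofActive A B g) '' T

end Defs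

/-- Word length of `g` with respect to the set `T`: the least `n` such that `g` is a
product of `n` elements of `T ∪ T⁻¹` (and `0` if no such `n` exists). -/
noncomputable def wordLength {G : Type*} [Group G] (T : Set G) (g : G) : ℕ :=
  sInf {n | ∃ f : Fin n → G, (∀ i, f i ∈ T ∪ T⁻¹) ∧ (List.ofFn f).prod = g}

/-- The distortion function of a subgroup `H` of `G`, where `T` is a generating set of `G`
and `S` a generating set of `H`. -/
noncomputable def distortion {G : Type*} [Group G] (T : Set G) (H : Subgroup G)
    (S : Set H) (l : ℕ) : ℕ :=
  sSup (wordLength S '' {h : H | wordLength T (h : G) ≤ l})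

/-- `f ⪯ g` : there is `C > 0` with `f l ≤ C * g (C * l)` for all `l`. -/
def Dominates (f g : ℕ → ℕ) : Prop := ∃ C : ℕ, 0 < C ∧ ∀ l, f l ≤ C * g (C * l)

/-- `f ≈ g` : `f ⪯ g` and `g ⪯ f`. -/
def DistEquiv (f g : ℕ → ℕ) : Prop := Dominates f g ∧ Dominates g f

/-- A subgroup is subnormal if there is a finite chain from it to the whole group,
each term normal in the next. -/
def IsSubnormal {G : Type*} [Group G] (H : Subgroup G) : Prop :=
  ∃ (n : ℕ) (c : ℕ → Subgroup G), c 0 = H ∧ c n = ⊤ ∧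
    ∀ i < n, c i ≤ c (i + 1) ∧ ∀ x ∈ c (i + 1), ∀ h ∈ c i, x * h * x⁻¹ ∈ c i

/-- `ℤ` as a multiplicative group. -/
abbrev Mℤ := Multiplicative ℤ

/-- The wreath product `ℤ wr ℤ`. -/
abbrev ZwrZ := WreathProduct Mℤ Mℤ

/-- The standard generator `a` of `ℤ wr ℤ` (passive copy, supported at `1`). -/
noncomputable def aZ : ZwrZ := ofPassive Mℤ Mℤ (Multiplicative.ofAdd 1)

/-- The standard generator `b` of `ℤ wr ℤ` (active copy). -/
def bZ : ZwrZ := ofActive Mℤ Mℤ (Multiplicative.ofAdd 1)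

/-- The wreath product `(ℤ/nℤ) wr ℤ^k`. -/
abbrev ZnWrZk (n k : ℕ) :=
  WreathProduct (Multiplicative (ZMod n)) (Multiplicative (Fin k → ℤ))

/-- The generator `a` of the passive group `ℤ/nℤ`. -/
noncomputable def a5 (n k : ℕ) : ZnWrZk n k :=
  ofPassive _ _ (Multiplicative.ofAdd (1 : ZMod n))

/-- The standard generators `b_1, …, b_k` of the active group `ℤ^k` (0-indexed:
`b5 n k i = b_{i+1}`). -/
def b5 (n k : ℕ) (i : Fin k) : ZnWrZk n k :=
  ofActive _ _ (Multiplicative.ofAdd (Pi.single i 1))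

/-- `b5' n k j = b_{j+1}` for `j < k`, and `1` otherwise. -/
noncomputable def b5' (n k : ℕ) (j : ℕ) : ZnWrZk n k :=
  if h : j < k then b5 n k ⟨j, h⟩ else 1

/-- Iterated commutators: `w5 n k 0 = a`, `w5 n k (j+1) = [w5 n k j, b_{j+1}]`,
so `w5 n k (k-1) = [⋯[[a,b_1],b_2],⋯,b_{k-1}]`. -/
noncomputable def w5 (n k : ℕ) : ℕ → ZnWrZk n k
  | 0 => a5 n k
  | j + 1 => ⁅w5 n k j, b5' n k j⁆
section WordLength

variable {G : Type*} [Group G] {T : Set G} {g : G}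

lemma wordLength_le_of_mem_pow {m : ℕ} (hg : g ∈ (T ∪ T⁻¹) ^ m) : wordLength T g ≤ m := by
  obtain ⟨f, hf⟩ := Set.mem_pow.mp hg
  exact Nat.sInf_le ⟨fun i => f i, fun i => (f i).2, hf⟩

lemma mem_pow_wordLength (hg : g ∈ Subgroup.closure T) : g ∈ (T ∪ T⁻¹) ^ wordLength T g := by
  have hg' : g ∈ Submonoid.closure (T ∪ T⁻¹) := by rwa [← Subgroup.closure_toSubmonoid]
  obtain ⟨L, hL, rfl⟩ := Submonoid.exists_list_of_mem_closure hg'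
  have : {n | ∃ f : Fin n → G, (∀ i, f i ∈ T ∪ T⁻¹) ∧ (List.ofFn f).prod = L.prod}.Nonempty :=
    ⟨L.length, L.get, fun i => hL _ (L.get_mem i), by rw [List.ofFn_get]⟩
  obtain ⟨f, hf, hprod⟩ := Nat.sInf_mem this
  exact Set.mem_pow.mpr ⟨fun i => ⟨f i, hf i⟩, hprod⟩

lemma inv_mem_pow_union_inv {m : ℕ} (hg : g ∈ (T ∪ T⁻¹) ^ m) : g⁻¹ ∈ (T ∪ T⁻¹) ^ m := by
  have hsymm : (T ∪ T⁻¹)⁻¹ = T ∪ T⁻¹ := by rw [Set.union_inv, inv_inv, Set.union_comm]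
  rw [← hsymm, inv_pow]
  exact Set.inv_mem_inv.mpr hg

lemma commutatorElement_mem_pow {x y : G} {p q : ℕ} (hx : x ∈ (T ∪ T⁻¹) ^ p)
    (hy : y ∈ (T ∪ T⁻¹) ^ q) : ⁅x, y⁆ ∈ (T ∪ T⁻¹) ^ (2 * p + 2 * q) := by
  rw [commutatorElement_def, show 2 * p + 2 * q = p + q + p + q by ring, pow_add, pow_add, pow_add]
  exact Set.mul_mem_mul (Set.mul_mem_mul (Set.mul_mem_mul hx hy) (inv_mem_pow_union_inv hx))
    (inv_mem_pow_union_inv hy)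

lemma setOf_wordLength_le_finite (hT : T.Finite) (R : ℕ) :
    {g ∈ Subgroup.closure T | wordLength T g ≤ R}.Finite := by
  have : Finite (T ∪ T⁻¹ : Set G) := (hT.union hT.inv).to_subtype
  refine (Set.finite_le_nat R).biUnion (fun m _ =>
    Set.finite_range fun f : Fin m → (T ∪ T⁻¹ : Set G) => (List.ofFn fun i => (f i : G)).prod)
    |>.subset fun g ⟨hg, hR⟩ => Set.mem_biUnion hR ?_
  exact Set.mem_pow.mp (mem_pow_wordLength hg)

lemma le_mul_wordLength (ν : G → ℕ) (h_one : ν 1 = 0) (h_mul : ∀ x y, ν (x * y) ≤ ν x + ν y)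
    (h_inv : ∀ x, ν x⁻¹ = ν x) {M : ℕ} (hM : ∀ t ∈ T, ν t ≤ M)
    (hg : g ∈ Subgroup.closure T) : ν g ≤ M * wordLength T g := by
  suffices ∀ m, ∀ x ∈ (T ∪ T⁻¹) ^ m, ν x ≤ M * m from this _ _ (mem_pow_wordLength hg)
  intro m
  induction m with
  | zero => simp [h_one]
  | succ m ih =>
    rintro _ ⟨x, hx, t, ht, rfl⟩
    have ht' : ν t ≤ M := by
      rcases ht with ht | ht
      · exact hM t ht
      · rw [← inv_inv t, h_inv]; exact hM _ ht
    calc ν (x * t) ≤ ν x + ν t := h_mul x t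
      _ ≤ M * m + M := add_le_add (ih x hx) ht'
      _ = M * (m + 1) := by ring

lemma wordLength_le_distortion {H : Subgroup G} (S : Set H) (hT : T.Finite)
    (hH : H ≤ Subgroup.closure T) {h : H} {R : ℕ} (hR : wordLength T (h : G) ≤ R) :
    wordLength S h ≤ distortion T H S R := by
  have hfin : {h : H | wordLength T (h : G) ≤ R}.Finite :=
    (setOf_wordLength_le_finite hT R).preimage Subtype.val_injective.injOn |>.subset
      fun h hh => ⟨hH h.2, hh⟩
  exact le_csSup (hfin.image _).bddAbove ⟨h, hR, rfl⟩

end WordLength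

section SemidirectProduct

open SemidirectProduct

lemma right_pow {N G : Type*} [Group N] [Group G] {φ : G →* MulAut N} (g : N ⋊[φ] G) (m : ℕ) :
    (g ^ m).right = g.right ^ m :=
  map_pow rightHom g m

lemma right_commutatorElement {N G : Type*} [Group N] [CommGroup G] {φ : G →* MulAut N}
    (g h : N ⋊[φ] G) : ⁅g, h⁆.right = 1 := by
  simp [commutatorElement_def, mul_right, inv_right]

end SemidirectProduct

section GroupRing

open MonoidAlgebra SemidirectProduct nonZeroDivisors

variable {R B : Type*} [CommRing R] [CommGroup B]

lemma one_sub_of_mem_nonZeroDivisors {b : B} (hb : ¬IsOfFinOrder b) :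
    1 - of R B b ∈ (MonoidAlgebra R B)⁰ := by
  refine mem_nonZeroDivisors_iff_right.mpr fun x hx => ?_
  have hperiodic : ∀ c, x.coeff (c * b⁻¹) = x.coeff c := fun c => by
    have := congrArg (·.coeff c) hx
    simp only [mul_sub, mul_one, of_apply, coeff_sub, Finsupp.sub_apply, coeff_mul_single_apply,
      coeff_zero, Finsupp.coe_zero, Pi.zero_apply] at this
    exact (sub_eq_zero.mp this).symm
  have horbit : ∀ (c : B) (m : ℕ), x.coeff (c * (b ^ m)⁻¹) = x.coeff c := fun c m => by
    induction m with
    | zero => simp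
    | succ m ih => rw [pow_succ', mul_inv_rev, ← mul_assoc, hperiodic, ih]
  ext c
  by_contra hc
  refine (Set.infinite_of_injective_forall_mem (f := fun m : ℕ => c * (b ^ m)⁻¹) ?_ fun m => ?_)
    x.coeff.support.finite_toSet
  · intro m m' h
    exact injective_pow_iff_not_isOfFinOrder.mpr hb (inv_injective (mul_left_cancel h))
  · simpa [horbit] using hc

/-- The base component of `g`, read as an element of the group ring; the coefficient of `b`
is the lamp at `b⁻¹`, so that `B` acts by left multiplication. -/
noncomputable def basePoly (g : WreathProduct (Multiplicative R) B) : MonoidAlgebra R B :=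
  .ofCoeff <| Finsupp.ofSupportFinite (fun b => ((g.left : B → Multiplicative R) b⁻¹).toAdd)
    ((g.left.2.preimage inv_injective.injOn).subset fun _ hb => hb)

variable (g h : WreathProduct (Multiplicative R) B)

lemma coeff_basePoly (b : B) :
    (basePoly g).coeff b = ((g.left : B → Multiplicative R) b⁻¹).toAdd := rfl

lemma basePoly_mul : basePoly (g * h) = basePoly g + of R B g.right * basePoly h := by
  ext b
  simp only [coeff_add, Finsupp.coe_add, Pi.add_apply, of_apply, coeff_single_mul_apply, one_mul,
    coeff_basePoly, mul_inv_rev, inv_inv]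
  rfl

lemma basePoly_one : basePoly (1 : WreathProduct (Multiplicative R) B) = 0 := by ext; rfl

lemma basePoly_inr (t : B) : basePoly (inr t : WreathProduct (Multiplicative R) B) = 0 := by ext; rfl

lemma basePoly_ofPassive (a : Multiplicative R) :
    basePoly (ofPassive _ B a) = MonoidAlgebra.single 1 a.toAdd := by
  ext b
  by_cases hb : b = 1
  · subst hb
    simp [coeff_basePoly, ofPassive, toBase]
  · simp [coeff_basePoly, ofPassive, toBase, hb]

lemma basePoly_inv : basePoly g⁻¹ = -(of R B g.right⁻¹ * basePoly g) := by
  have := basePoly_mul g⁻¹ g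
  rw [inv_mul_cancel, basePoly_one, inv_right] at this
  exact eq_neg_of_add_eq_zero_left this.symm

lemma basePoly_commutatorElement_inr (t : B) :
    basePoly ⁅g, inr t⁆ = (1 - of R B t) * basePoly g := by
  simp only [commutatorElement_def, basePoly_mul, basePoly_inv, basePoly_inr, mul_right,
    inv_right, right_inr, mul_zero, neg_zero, add_zero]
  rw [mul_neg, ← mul_assoc, ← map_mul, mul_inv_cancel_comm]
  ring

lemma basePoly_conj_inr (t : B) :
    basePoly (inr t * g * (inr t)⁻¹) = of R B t * basePoly g := by
  simp only [basePoly_mul, basePoly_inv, basePoly_inr, mul_right, right_inr, mul_zero,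
    neg_zero, zero_add, add_zero]

lemma basePoly_pow (m : ℕ) :
    basePoly (g ^ m) = (∑ i ∈ Finset.range m, of R B g.right ^ i) * basePoly g := by
  induction m with
  | zero => simp [basePoly_one]
  | succ m ih =>
    rw [pow_succ, basePoly_mul, ih, Finset.sum_range_succ, right_pow, map_pow]
    ring

lemma eq_of_right_eq_of_basePoly_eq (hr : g.right = h.right) (hb : basePoly g = basePoly h) :
    g = h := by
  refine SemidirectProduct.ext (Subtype.ext (funext fun b => ?_)) hr
  simpa [coeff_basePoly] using congrArg (·.coeff b⁻¹) hb

end GroupRing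

section Lamplighter

open MonoidAlgebra SemidirectProduct nonZeroDivisors Multiplicative

variable {n k : ℕ}

def stdVec (k j : ℕ) : Fin k → ℤ := fun i => if (i : ℕ) = j then 1 else 0

abbrev standardGens (n k : ℕ) : Set (ZnWrZk n k) := {a5 n k} ∪ Set.range (b5 n k)

lemma stdVec_ne_zero {j : ℕ} (hj : j < k) : stdVec k j ≠ 0 :=
  fun h => by simpa [stdVec] using congrFun h ⟨j, hj⟩

lemma stdVec_eq_single (i : Fin k) : stdVec k i = Pi.single i 1 := by
  ext i'
  simp [stdVec, Pi.single_apply, Fin.ext_iff]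

lemma b5'_eq_inr (j : ℕ) : b5' n k j = inr (ofAdd (stdVec k j)) := by
  unfold b5' b5 ofActive
  split_ifs with hj
  · rw [← stdVec_eq_single ⟨j, hj⟩]
  · have : stdVec k j = 0 := funext fun i => if_neg (by omega)
    rw [this, ofAdd_zero, map_one]

lemma b5'_mem_union_inv {j : ℕ} (hj : j < k) :
    b5' n k j ∈ standardGens n k ∪ (standardGens n k)⁻¹ := by
  rw [b5', dif_pos hj]
  exact Or.inl (Or.inr ⟨_, rfl⟩)

/-- The monomial `x_{j+1}` of `(ℤ/nℤ)[ℤ^k]`, indexed like `b5'`. -/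
noncomputable abbrev X (n k j : ℕ) : MonoidAlgebra (ZMod n) (Multiplicative (Fin k → ℤ)) :=
  of _ _ (ofAdd (stdVec k j))

lemma right_a5 : (a5 n k).right = 1 := rfl

lemma basePoly_a5 : basePoly (a5 n k) = 1 := by
  rw [a5, basePoly_ofPassive, toAdd_ofAdd, one_def]

noncomputable def wPoly (n k j : ℕ) : MonoidAlgebra (ZMod n) (Multiplicative (Fin k → ℤ)) :=
  ∏ i ∈ Finset.range j, (1 - X n k i)

lemma wPoly_mem_nonZeroDivisors {j : ℕ} (hj : j ≤ k) : wPoly n k j ∈ (MonoidAlgebra _ _)⁰ :=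
  Submonoid.prod_mem _ fun i hi => one_sub_of_mem_nonZeroDivisors <| by
    rw [isOfFinOrder_iff_eq_one, ← ofAdd_zero, ofAdd.injective.eq_iff]
    exact stdVec_ne_zero ((Finset.mem_range.mp hi).trans_le hj)

lemma basePoly_w5 (j : ℕ) : basePoly (w5 n k j) = wPoly n k j := by
  induction j with
  | zero => rw [w5, basePoly_a5, wPoly, Finset.prod_range_zero]
  | succ j ih =>
    rw [w5, b5'_eq_inr, basePoly_commutatorElement_inr, ih, wPoly, wPoly,
      Finset.prod_range_succ, mul_comm]

lemma right_w5 (j : ℕ) : (w5 n k j).right = 1 := by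
  cases j with
  | zero => rfl
  | succ j => exact right_commutatorElement _ _

abbrev subgroupH (n k : ℕ) : Subgroup (ZnWrZk n k) :=
  Subgroup.closure ({w5 n k (k - 1)} ∪ Set.range (b5 n k))

lemma w5_mem_subgroupH : w5 n k (k - 1) ∈ subgroupH n k := Subgroup.subset_closure (Or.inl rfl)

lemma b5_mem_subgroupH (i : Fin k) : b5 n k i ∈ subgroupH n k :=
  Subgroup.subset_closure (Or.inr ⟨i, rfl⟩)

lemma inr_mem_subgroupH (t : Multiplicative (Fin k → ℤ)) : inr t ∈ subgroupH n k := by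
  have ht : t = ∏ i, ofAdd (Pi.single i (1 : ℤ)) ^ (toAdd t i) := by
    apply toAdd.injective
    ext j
    simp [toAdd_prod, Finset.sum_apply, Pi.single_apply]
  show t ∈ (subgroupH n k).comap inr
  rw [ht]
  exact Subgroup.prod_mem _ fun i _ => zpow_mem (Subgroup.mem_comap.mpr (b5_mem_subgroupH i)) _

lemma wPoly_dvd_basePoly {g : ZnWrZk n k} (hg : g ∈ subgroupH n k) :
    wPoly n k (k - 1) ∣ basePoly g := by
  induction hg using Subgroup.closure_induction with
  | mem x hx =>
    rcases hx with rfl | ⟨i, rfl⟩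
    · rw [basePoly_w5]
    · rw [b5, ofActive, basePoly_inr]
      exact dvd_zero _
  | one => rw [basePoly_one]; exact dvd_zero _
  | mul x y _ _ hx hy => rw [basePoly_mul]; exact dvd_add hx (hy.mul_left _)
  | inv x _ hx => rw [basePoly_inv]; exact (hx.mul_left _).neg_right

lemma exists_mem_subgroupH_basePoly_eq [NeZero n] (C : MonoidAlgebra (ZMod n) _) :
    ∃ g ∈ subgroupH n k, g.right = 1 ∧ basePoly g = wPoly n k (k - 1) * C := by
  induction C using MonoidAlgebra.induction_linear with
  | zero => exact ⟨1, one_mem _, rfl, by rw [basePoly_one, mul_zero]⟩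
  | add C₁ C₂ h₁ h₂ =>
    obtain ⟨g₁, hg₁, hr₁, hb₁⟩ := h₁
    obtain ⟨g₂, hg₂, hr₂, hb₂⟩ := h₂
    refine ⟨g₁ * g₂, mul_mem hg₁ hg₂, by rw [mul_right, hr₁, hr₂, one_mul], ?_⟩
    rw [basePoly_mul, hr₁, map_one, one_mul, hb₁, hb₂, mul_add]
  | single b c =>
    refine ⟨inr b * w5 n k (k - 1) ^ c.val * (inr b)⁻¹,
      mul_mem (mul_mem (inr_mem_subgroupH b) (pow_mem w5_mem_subgroupH _))
        (inv_mem (inr_mem_subgroupH b)), ?_, ?_⟩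
    · simp [mul_right, inv_right, right_pow, right_w5]
    · rw [basePoly_conj_inr, basePoly_pow, basePoly_w5, right_w5]
      simp only [map_one, one_pow, Finset.sum_const, Finset.card_range, nsmul_eq_mul, mul_one,
        natCast_def, ZMod.natCast_zmod_val, of_apply]
      rw [← mul_assoc, single_mul_single, mul_one, one_mul, mul_comm]

lemma mem_subgroupH_iff [NeZero n] (g : ZnWrZk n k) :
    g ∈ subgroupH n k ↔ wPoly n k (k - 1) ∣ basePoly g := by
  refine ⟨wPoly_dvd_basePoly, fun ⟨C, hC⟩ => ?_⟩
  obtain ⟨h, hH, hr, hb⟩ := exists_mem_subgroupH_basePoly_eq (k := k) C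
  have : g * (inr g.right)⁻¹ = h := by
    refine eq_of_right_eq_of_basePoly_eq _ _ (by simp [mul_right, inv_right, hr]) ?_
    rw [basePoly_mul, basePoly_inv, basePoly_inr, hb, hC]
    simp
  rw [← inv_mul_cancel_right g (inr g.right), this]
  exact mul_mem hH (inr_mem_subgroupH _)

/-- For `g ∈ H`, the unique `C` with `basePoly g = wPoly n k (k - 1) * C` (junk otherwise). -/
noncomputable def cofactor (g : ZnWrZk n k) : MonoidAlgebra (ZMod n) (Multiplicative (Fin k → ℤ)) :=
  Classical.epsilon fun C => basePoly g = wPoly n k (k - 1) * C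

lemma basePoly_eq_wPoly_mul_cofactor {g : ZnWrZk n k} (hg : wPoly n k (k - 1) ∣ basePoly g) :
    basePoly g = wPoly n k (k - 1) * cofactor g :=
  Classical.epsilon_spec hg

lemma cofactor_eq {g : ZnWrZk n k} {C : MonoidAlgebra (ZMod n) _}
    (hC : basePoly g = wPoly n k (k - 1) * C) : cofactor g = C :=
  (mul_cancel_left_mem_nonZeroDivisors (wPoly_mem_nonZeroDivisors (Nat.sub_le k 1))).mp
    ((basePoly_eq_wPoly_mul_cofactor ⟨C, hC⟩).symm.trans hC)

noncomputable def weight (g : ZnWrZk n k) : ℕ := (cofactor g).coeff.support.card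

lemma weight_one : weight (1 : ZnWrZk n k) = 0 := by
  rw [weight, cofactor_eq (C := 0) (by rw [basePoly_one, mul_zero])]
  rfl

lemma weight_mul {g h : ZnWrZk n k} (hg : g ∈ subgroupH n k) (hh : h ∈ subgroupH n k) :
    weight (g * h) ≤ weight g + weight h := by
  classical
  obtain ⟨C₁, hC₁⟩ := wPoly_dvd_basePoly hg
  obtain ⟨C₂, hC₂⟩ := wPoly_dvd_basePoly hh
  have hC : cofactor (g * h) = C₁ + of _ _ g.right * C₂ :=
    cofactor_eq (by rw [basePoly_mul, hC₁, hC₂]; ring)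
  rw [weight, weight, weight, hC, cofactor_eq hC₁, cofactor_eq hC₂]
  calc (C₁ + of _ _ g.right * C₂).coeff.support.card
      ≤ (C₁.coeff.support ∪ (of _ _ g.right * C₂).coeff.support).card :=
        Finset.card_le_card Finsupp.support_add
    _ ≤ C₁.coeff.support.card + (of _ _ g.right * C₂).coeff.support.card := Finset.card_union_le _ _
    _ = C₁.coeff.support.card + C₂.coeff.support.card := by
        rw [of_apply, support_coeff_single_mul _ _ (by simp), Finset.card_map]

lemma weight_inv {g : ZnWrZk n k} (hg : g ∈ subgroupH n k) : weight g⁻¹ = weight g := by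
  obtain ⟨C, hC⟩ := wPoly_dvd_basePoly hg
  rw [weight, weight, cofactor_eq (C := -(of _ _ g.right⁻¹ * C)) (by rw [basePoly_inv, hC]; ring),
    cofactor_eq hC, coeff_neg, Finsupp.support_neg, of_apply,
    support_coeff_single_mul _ _ (by simp), Finset.card_map]

noncomputable def boxElement (n k l : ℕ) : ℕ → ZnWrZk n k
  | 0 => (a5 n k * b5' n k (k - 1)) ^ l * (b5' n k (k - 1) ^ l)⁻¹
  | j + 1 => ⁅boxElement n k l j, b5' n k j ^ l⁆

lemma basePoly_boxElement (l j : ℕ) :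
    basePoly (boxElement n k l j) = wPoly n k j *
      ((∏ i ∈ Finset.range j, ∑ m ∈ Finset.range l, X n k i ^ m) *
        ∑ m ∈ Finset.range l, X n k (k - 1) ^ m) := by
  induction j with
  | zero =>
    simp [boxElement, basePoly_mul, basePoly_inv, basePoly_pow, basePoly_a5, right_a5, mul_right,
      b5'_eq_inr, ← map_pow, basePoly_inr, wPoly]
  | succ j ih =>
    rw [boxElement, b5'_eq_inr, ← map_pow, basePoly_commutatorElement_inr, ih, map_pow,
      ← mul_neg_geom_sum, wPoly, wPoly, Finset.prod_range_succ, Finset.prod_range_succ]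
    ring

lemma card_le_card_support_prod_geom_sum (R : Type*) [CommSemiring R] [Nontrivial R] (k l : ℕ) :
    l ^ k ≤ (∏ i : Fin k, ∑ m ∈ Finset.range l,
      of R (Multiplicative (Fin k → ℤ)) (ofAdd (Pi.single i 1)) ^ m).coeff.support.card := by
  classical
  set box := Fintype.piFinset fun _ : Fin k => Finset.range l
  set corner : (Fin k → ℕ) → Multiplicative (Fin k → ℤ) := fun p => ofAdd fun i => (p i : ℤ)
  have hcorner : Function.Injective corner := fun p q h =>
    funext fun i => by simpa [corner] using congrFun (ofAdd.injective h) i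
  have hexpand : ∏ i : Fin k, ∑ m ∈ Finset.range l, of R _ (ofAdd (Pi.single i 1)) ^ m =
      ∑ p ∈ box, of R _ (corner p) := by
    rw [Finset.prod_univ_sum]
    refine Finset.sum_congr rfl fun p _ => ?_
    simp_rw [← map_pow, ← map_prod]
    congr 1
    apply toAdd.injective
    ext j
    simp [corner, toAdd_prod, Finset.sum_apply, Pi.single_apply]
  have hcoeff : ∀ p ∈ box, (∑ q ∈ box, of R _ (corner q)).coeff (corner p) = 1 := fun p hp => by
    simp [coeff_sum, Finsupp.finsetSum_apply, of_apply, Finsupp.single_apply, hcorner.eq_iff, hp]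
  calc l ^ k = (box.image corner).card := by
        rw [Finset.card_image_of_injective _ hcorner]; simp [box]
    _ ≤ _ := Finset.card_le_card fun x hx => by
        obtain ⟨p, hp, rfl⟩ := Finset.mem_image.mp hx
        rw [hexpand, Finsupp.mem_support_iff, hcoeff p hp]
        exact one_ne_zero

lemma boxElement_mem_subgroupH [NeZero n] (l : ℕ) : boxElement n k l (k - 1) ∈ subgroupH n k :=
  (mem_subgroupH_iff _).mpr ⟨_, basePoly_boxElement l (k - 1)⟩

lemma pow_le_weight_boxElement [Nontrivial (ZMod n)] (hk : k ≠ 0) (l : ℕ) :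
    l ^ k ≤ weight (boxElement n k l (k - 1)) := by
  have hbox : (∏ i ∈ Finset.range (k - 1), ∑ m ∈ Finset.range l, X n k i ^ m) *
      ∑ m ∈ Finset.range l, X n k (k - 1) ^ m =
      ∏ i : Fin k, ∑ m ∈ Finset.range l, of _ _ (ofAdd (Pi.single i 1)) ^ m := by
    rw [← Finset.prod_range_succ (fun i => ∑ m ∈ Finset.range l, X n k i ^ m),
      Nat.sub_add_cancel (Nat.one_le_iff_ne_zero.mpr hk), ← Fin.prod_univ_eq_prod_range]
    simp_rw [X, stdVec_eq_single]
  rw [weight, cofactor_eq (basePoly_boxElement l (k - 1)), hbox]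
  exact card_le_card_support_prod_geom_sum _ k l

lemma boxElement_mem_pow {j : ℕ} (hj : j < k) :
    ∃ c, ∀ l, boxElement n k l j ∈ (standardGens n k ∪ (standardGens n k)⁻¹) ^ (c * l) := by
  induction j with
  | zero =>
    have hab : a5 n k * b5' n k (k - 1) ∈ (standardGens n k ∪ (standardGens n k)⁻¹) ^ 2 := by
      rw [pow_two]
      exact Set.mul_mem_mul (Or.inl (Or.inl rfl)) (b5'_mem_union_inv (by omega))
    refine ⟨3, fun l => ?_⟩
    rw [show 3 * l = 2 * l + l by ring, pow_add, pow_mul]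
    exact Set.mul_mem_mul (Set.pow_mem_pow hab)
      (inv_mem_pow_union_inv (Set.pow_mem_pow (b5'_mem_union_inv (by omega))))
  | succ j ih =>
    obtain ⟨c, hc⟩ := ih (by omega)
    refine ⟨2 * c + 2, fun l => ?_⟩
    rw [show (2 * c + 2) * l = 2 * (c * l) + 2 * l by ring]
    exact commutatorElement_mem_pow (hc l) (Set.pow_mem_pow (b5'_mem_union_inv (by omega)))

lemma w5_mem_closure (j : ℕ) : w5 n k j ∈ Subgroup.closure (standardGens n k) := by
  induction j with
  | zero => exact Subgroup.subset_closure (Or.inl rfl)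
  | succ j ih =>
    have hb : b5' n k j ∈ Subgroup.closure (standardGens n k) := by
      unfold b5'
      split_ifs
      · exact Subgroup.subset_closure (Or.inr ⟨_, rfl⟩)
      · exact one_mem _
    rw [w5, commutatorElement_def]
    exact mul_mem (mul_mem (mul_mem ih hb) (inv_mem ih)) (inv_mem hb)

lemma subgroupH_le_closure : subgroupH n k ≤ Subgroup.closure (standardGens n k) := by
  rw [Subgroup.closure_le]
  rintro _ (rfl | ⟨i, rfl⟩)
  · exact w5_mem_closure _
  · exact Subgroup.subset_closure (Or.inr ⟨i, rfl⟩)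

end Lamplighter

/-- For `n ≥ 2`, `k ≥ 2`, the subgroup
`H = ⟨[⋯[[a,b_1],b_2],⋯,b_{k-1}], b_1, …, b_k⟩` of `(ℤ/nℤ) wr ℤ^k` has distortion
`⪰ l^k` (with respect to the generating set `{a, b_1, …, b_k}` of the ambient group). -/
theorem statement5 (n k : ℕ) (hn : 2 ≤ n) (hk : 2 ≤ k) :
    ∀ S : Set ↥(Subgroup.closure ({w5 n k (k - 1)} ∪ Set.range (b5 n k))),
      S.Finite → Subgroup.closure S = ⊤ →
      Dominates (fun l => l ^ k)
        (distortion ({a5 n k} ∪ Set.range (b5 n k))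
          (Subgroup.closure ({w5 n k (k - 1)} ∪ Set.range (b5 n k))) S) := by
  intro S hS hSgen
  have : Fact (1 < n) := ⟨by omega⟩
  obtain ⟨c, hc⟩ := boxElement_mem_pow (n := n) (show k - 1 < k by omega)
  obtain ⟨M, hM⟩ := (hS.image fun s : subgroupH n k => weight (s : ZnWrZk n k)).bddAbove
  refine ⟨c + M + 1, by omega, fun l => ?_⟩
  let h : subgroupH n k := ⟨boxElement n k l (k - 1), boxElement_mem_subgroupH l⟩
  have hlen : wordLength (standardGens n k) (h : ZnWrZk n k) ≤ (c + M + 1) * l :=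
    (wordLength_le_of_mem_pow (hc l)).trans (Nat.mul_le_mul_right _ (by omega))
  calc l ^ k ≤ weight (h : ZnWrZk n k) := pow_le_weight_boxElement (by omega) l
    _ ≤ M * wordLength S h :=
        le_mul_wordLength (fun x : subgroupH n k => weight (x : ZnWrZk n k)) weight_one
          (fun x y => weight_mul x.2 y.2) (fun x => weight_inv x.2)
          (fun s hs => hM ⟨s, hs, rfl⟩) (hSgen ▸ Subgroup.mem_top h)
    _ ≤ M * distortion _ _ S ((c + M + 1) * l) := Nat.mul_le_mul_left _
        (wordLength_le_distortion S ((Set.finite_singleton _).union (Set.finite_range _))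
          subgroupH_le_closure hlen)
    _ ≤ (c + M + 1) * distortion _ _ S ((c + M + 1) * l) := Nat.mul_le_mul_right _ (by omega)

end DistortionPaper
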